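/- arXiv:1604.05972 — 3 statements merged into one kernel-verified Lean document; each statement's English description precedes it below -/
import Mathlib

section
/- There exists a unique β in (0, π/2) such that e^{2π·cot(β)} = 1 + 2π, and for this β the value 1/cos(β) is approximately 3.318674 (in particular 3.31 < 1/cos(β) < 3.32). -/
open Real Set

private lemma expA : Real.exp (2 * π * 0.3159) < 1 + 2 * π := by
  have hπu : π < 3.141593 := pi_lt_d6
  have hπl : 3.141592 < π := pi_gt_d6
  have h1 : 2 * π * 0.3159 < 1.98486 := by nlinarith
  have h2 : Real.exp (2 * π * 0.3159) < Real.exp 1.98486 := Real.exp_lt_exp.mpr h1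
  have h3 : Real.exp 1.98486 < 7.2831 := by
    have he : Real.exp 1 < 2.7182818286 := Real.exp_one_lt_d9
    have he2 : Real.exp 2 < 7.38905611 := by
      have h : Real.exp 2 = Real.exp 1 * Real.exp 1 := by rw [← Real.exp_add]; norm_num
      nlinarith [Real.exp_pos 1]
    have hx : (1:ℝ) + 0.01514 ≤ Real.exp 0.01514 := by
      have := Real.add_one_le_exp (0.01514:ℝ); linarith
    have hmul : Real.exp 1.98486 * Real.exp 0.01514 = Real.exp 2 := by
      rw [← Real.exp_add]; norm_num
    nlinarith [Real.exp_pos 1.98486, Real.exp_pos 0.01514]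
  linarith

private lemma expB : 1 + 2 * π < Real.exp (2 * π * 0.3169) := by
  have hπl : 3.141592 < π := pi_gt_d6
  have hπu : π < 3.141593 := pi_lt_d6
  have h1 : (1.99114:ℝ) < 2 * π * 0.3169 := by nlinarith
  have h3 : (7.2832:ℝ) < Real.exp 1.99114 := by
    have he : 2.7182818283 < Real.exp 1 := Real.exp_one_gt_d9
    have he2 : (7.389055:ℝ) < Real.exp 2 := by
      have h : Real.exp 2 = Real.exp 1 * Real.exp 1 := by rw [← Real.exp_add]; norm_num
      nlinarith
    have hx : (1:ℝ) - 0.00886 ≤ Real.exp (-0.00886) := by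
      have := Real.add_one_le_exp (-0.00886:ℝ); linarith
    have hmul : Real.exp 1.99114 = Real.exp 2 * Real.exp (-0.00886) := by
      rw [← Real.exp_add]; norm_num
    nlinarith [Real.exp_pos (-0.00886)]
  have h2 := Real.exp_lt_exp.mpr h1
  nlinarith

private lemma cot_key {y : ℝ} (h0 : 0 < y) (h2 : y < π / 2) :
    Real.cot y = (Real.tan y)⁻¹ ∧ 0 < Real.tan y ∧ 0 < Real.cos y := by
  have hπ : (0:ℝ) < π := Real.pi_pos
  have hs : 0 < Real.sin y := Real.sin_pos_of_pos_of_lt_pi h0 (by linarith)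
  have hc : 0 < Real.cos y := Real.cos_pos_of_mem_Ioo ⟨by linarith, h2⟩
  have ht : 0 < Real.tan y := by
    rw [Real.tan_eq_sin_div_cos]; positivity
  refine ⟨?_, ht, hc⟩
  rw [Real.cot_eq_cos_div_sin, Real.tan_eq_sin_div_cos, inv_div]

theorem spiral_eccentricity_exists_unique :
    (∃! β : ℝ, β ∈ Ioo 0 (π / 2) ∧ Real.exp (2 * π * Real.cot β) = 1 + 2 * π) ∧
    (∀ β : ℝ, β ∈ Ioo 0 (π / 2) → Real.exp (2 * π * Real.cot β) = 1 + 2 * π →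
      3.31 < 1 / Real.cos β ∧ 1 / Real.cos β < 3.32) := by
  have hπ : (0:ℝ) < π := Real.pi_pos
  constructor
  · set c : ℝ := Real.log (1 + 2 * π) / (2 * π) with hc
    have hc0 : 0 < c := by
      apply div_pos (Real.log_pos (by linarith)) (by linarith)
    have h2πc : 2 * π * c = Real.log (1 + 2 * π) := by
      rw [hc]; field_simp
    refine ⟨Real.arctan c⁻¹, ⟨⟨by rw [← Real.arctan_zero]; exact Real.arctan_strictMono (by positivity),
      Real.arctan_lt_pi_div_two _⟩, ?_⟩, ?_⟩
    · have hmem : Real.arctan c⁻¹ ∈ Ioo 0 (π / 2) :=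
        ⟨by rw [← Real.arctan_zero]; exact Real.arctan_strictMono (by positivity), Real.arctan_lt_pi_div_two _⟩
      obtain ⟨hcot, ht, -⟩ := cot_key hmem.1 hmem.2
      rw [hcot, Real.tan_arctan, inv_inv, h2πc, Real.exp_log (by linarith)]
    · rintro y ⟨⟨hy0, hy2⟩, hye⟩
      obtain ⟨hcot, ht, -⟩ := cot_key hy0 hy2
      have hlog : 2 * π * Real.cot y = Real.log (1 + 2 * π) := by
        have := congrArg Real.log hye
        rwa [Real.log_exp] at this
      have hcy : Real.cot y = c := by
        rw [hc, ← hlog]; field_simp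
      have htan : Real.tan y = c⁻¹ := by
        rw [hcot] at hcy
        rw [← hcy, inv_inv]
      rw [← htan, Real.arctan_tan (by linarith) hy2]
  · rintro y ⟨hy0, hy2⟩ hye
    obtain ⟨hcot, ht, hcos⟩ := cot_key hy0 hy2
    have hbound1 : (0.3159:ℝ) < Real.cot y := by
      have h1 : Real.exp (2 * π * 0.3159) < Real.exp (2 * π * Real.cot y) := by
        rw [hye]; exact expA
      have h2 : 2 * π * 0.3159 < 2 * π * Real.cot y := Real.exp_lt_exp.mp h1
      exact (mul_lt_mul_iff_right₀ (by positivity : (0:ℝ) < 2 * π)).mp h2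
    have hbound2 : Real.cot y < (0.3169:ℝ) := by
      have h1 : Real.exp (2 * π * Real.cot y) < Real.exp (2 * π * 0.3169) := by
        rw [hye]; exact expB
      have h2 : 2 * π * Real.cot y < 2 * π * 0.3169 := Real.exp_lt_exp.mp h1
      exact (mul_lt_mul_iff_right₀ (by positivity : (0:ℝ) < 2 * π)).mp h2
    rw [hcot] at hbound1 hbound2
    set t := Real.tan y with htdef
    have hinv : t * t⁻¹ = 1 := mul_inv_cancel₀ ht.ne'
    have htl : (3.1555:ℝ) < t := by nlinarith
    have htu : t < (3.1656:ℝ) := by nlinarith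
    have hcosne : Real.cos y ≠ 0 := hcos.ne'
    have hid : (1 / Real.cos y) ^ 2 = 1 + t ^ 2 := by
      rw [htdef, Real.tan_eq_sin_div_cos]
      have hs := Real.sin_sq_add_cos_sq y
      field_simp; linarith
    have hcpos : 0 < 1 / Real.cos y := by positivity
    constructor
    · nlinarith
    · nlinarith
end

section
/- Let β = arccot(ln(2π+1)/(2π)) and define f(γ) = e^{γ·cot(β)} / (cos(β)·(1+γ)) for γ ∈ [0, 2π]. Then f(0) = f(2π) = 1/cos(β), and f(γ) < 1/cos(β) for all γ ∈ (0, 2π). -/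
open Real Set

theorem spiral_ratio_endpoints (β : ℝ) (hβ : β ∈ Ioo 0 (π / 2))
    (hcot : Real.cot β = Real.log (2 * π + 1) / (2 * π))
    (f : ℝ → ℝ)
    (hf : ∀ γ, f γ = Real.exp (γ * Real.cot β) / (Real.cos β * (1 + γ))) :
    f 0 = 1 / Real.cos β ∧ f (2 * π) = 1 / Real.cos β ∧
    ∀ γ ∈ Ioo 0 (2 * π), f γ < 1 / Real.cos β := by
  have hπ : (0:ℝ) < π := Real.pi_pos
  have h2π : (0:ℝ) < 2 * π := by positivity
  have hcos : 0 < Real.cos β := Real.cos_pos_of_mem_Ioo ⟨by linarith [hβ.1], hβ.2⟩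
  have hkey : Real.exp (2 * π * Real.cot β) = 2 * π + 1 := by
    rw [hcot, mul_div_cancel₀ _ (ne_of_gt h2π)]
    exact Real.exp_log (by linarith)
  refine ⟨?_, ?_, ?_⟩
  · rw [hf]; simp
  · rw [hf, hkey]
    field_simp
    ring
  · intro γ hγ
    set t := γ / (2 * π) with ht
    have ht0 : 0 < t := div_pos hγ.1 h2π
    have ht1 : t < 1 := (div_lt_one h2π).2 hγ.2
    have hconc := strictConcaveOn_log_Ioi.2 (show (1:ℝ) ∈ Ioi 0 by norm_num)
      (show (2*π+1:ℝ) ∈ Ioi 0 by exact mem_Ioi.2 (by linarith)) (by linarith)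
      (show 0 < 1 - t by linarith) ht0 (by ring)
    have hcomb : (1 - t) • (1:ℝ) + t • (2*π+1) = 1 + γ := by
      simp only [smul_eq_mul, ht]
      field_simp
      ring
    rw [hcomb, Real.log_one] at hconc
    have hlt : γ * Real.cot β < Real.log (1 + γ) := by
      rw [hcot]
      have h1 : γ * (Real.log (2*π+1) / (2*π)) = t * Real.log (2*π+1) := by
        rw [ht]; ring
      rw [h1]
      simpa using hconc
    have hexp : Real.exp (γ * Real.cot β) < 1 + γ :=
      calc Real.exp (γ * Real.cot β) < Real.exp (Real.log (1+γ)) := Real.exp_lt_exp.2 hlt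
        _ = 1 + γ := Real.exp_log (by linarith [hγ.1])
    rw [hf, div_lt_div_iff₀ (by nlinarith [hγ.1, hcos]) hcos]
    nlinarith [hcos, hγ.1]
end

section
/- For each integer n ≥ 3 and a > 1, define g_n(a) = (1/(a−1))·√(1 − 2cos(2π/n)·a + a²)·( 1/(1 + 2π/n) + a^{n+1}/(1 + 2π) ). Then for every a > 1 and n sufficiently large, g_n(a) > 6.62, and hence max of the two corresponding ratios exceeds 3.31. -/
open Real

set_option maxHeartbeats 2000000

private lemma log_ge_sub_sq {x : ℝ} (hx : 0 ≤ x) : x - x ^ 2 ≤ Real.log (1 + x) := by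
  have h0 : (0:ℝ) < 1 + x := by linarith
  have h1 : Real.log (1 + x)⁻¹ ≤ (1 + x)⁻¹ - 1 := Real.log_le_sub_one_of_pos (by positivity)
  rw [Real.log_inv] at h1
  have h3 : (1 + x)⁻¹ ≤ 1 - x + x ^ 2 := by
    rw [inv_eq_one_div, div_le_iff₀ h0]
    nlinarith [pow_nonneg hx 3]
  linarith

private lemma exp19_ge : (6.6858 : ℝ) ≤ Real.exp 1.9 := by
  have h := Real.sum_le_exp_of_nonneg (x := 1.9) (by norm_num) 13
  refine le_trans ?_ h
  norm_num [Finset.sum_range_succ, Nat.factorial]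

/-- Linear lower bound for `exp` coming from the tangent at `1.9`. -/
private lemma exp_linear_lb (s : ℝ) : 6.6856 * (s - 0.9) ≤ 0.99998 * Real.exp s := by
  rcases le_or_gt s 0.9 with h | h
  · nlinarith [Real.exp_pos s]
  · have h1 : Real.exp s = Real.exp 1.9 * Real.exp (s - 1.9) := by
      rw [← Real.exp_add]; ring_nf
    have h2 : s - 0.9 ≤ Real.exp (s - 1.9) := by
      have := Real.add_one_le_exp (s - 1.9); linarith
    nlinarith [exp19_ge, Real.exp_pos (s - 1.9),
      mul_le_mul exp19_ge h2 (by linarith) (Real.exp_pos 1.9).le]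

/-- The key quartic inequality: for all `s > 0`,
`48.2147 s < √(s² + 39.4784) · (6.6856 s + 1.26607)`. -/
private lemma key_ineq {s : ℝ} (hs : 0 < s) :
    48.2147 * s < Real.sqrt (s ^ 2 + 39.4784) * (6.6856 * s + 1.26607) := by
  have hY : (0:ℝ) ≤ s ^ 2 + 39.4784 := by positivity
  have h2 : (48.2147 * s) ^ 2 <
      (Real.sqrt (s ^ 2 + 39.4784) * (6.6856 * s + 1.26607)) ^ 2 := by
    rw [mul_pow, mul_pow, Real.sq_sqrt hY]
    nlinarith [sq_nonneg (s * (s - 39/20)), mul_nonneg hs.le (sq_nonneg (s - 39/20)),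
      sq_nonneg (s - 39/20), mul_pos hs hs, hs.le]
  exact lt_of_pow_lt_pow_left₀ 2 (by positivity) h2

theorem lower_bound_functional (g : ℕ → ℝ → ℝ)
    (hg : ∀ (n : ℕ) (a : ℝ), g n a =
      (1 / (a - 1)) * Real.sqrt (1 - 2 * Real.cos (2 * π / n) * a + a ^ 2) *
        (1 / (1 + 2 * π / n) + a ^ (n + 1) / (1 + 2 * π))) :
    ∃ N : ℕ, 3 ≤ N ∧ ∀ n : ℕ, N ≤ n → ∀ a : ℝ, 1 < a →
      g n a > 6.62 ∧ max (g n a / 2) (g n a / 2) > 3.31 := by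
  refine ⟨1000000, by norm_num, ?_⟩
  intro n hn a ha
  have hπ1 : (3.141592 : ℝ) < π := Real.pi_gt_d6
  have hπ2 : π < 3.141593 := Real.pi_lt_d6
  have hn' : (1000000 : ℝ) ≤ (n : ℝ) := by exact_mod_cast hn
  have hnpos : (0 : ℝ) < (n : ℝ) := by linarith
  set t : ℝ := a - 1 with ht_def
  set θ : ℝ := 2 * π / (n : ℝ) with hθ_def
  set c : ℝ := 1 + 2 * π with hc_def
  clear_value t θ c
  have ht : 0 < t := by rw [ht_def]; linarith
  have hc : (0:ℝ) < c := by rw [hc_def]; nlinarith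
  have hθpos : 0 < θ := by rw [hθ_def]; exact div_pos (by nlinarith) hnpos
  have hθub : θ ≤ 0.0000063 := by
    rw [hθ_def, div_le_iff₀ hnpos]; nlinarith
  set X : ℝ := 1 - 2 * Real.cos θ * a + a ^ 2 with hX_def
  set P : ℝ := 1 / (1 + θ) + a ^ (n + 1) / c with hP_def
  clear_value X P
  have hcosle : Real.cos θ ≤ 1 := Real.cos_le_one θ
  have hXeq : X = t ^ 2 + 2 * a * (1 - Real.cos θ) := by rw [hX_def, ht_def]; ring
  have hXpos : 0 ≤ X := by
    rw [hXeq]; nlinarith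
  have hPpos : 0 < P := by
    rw [hP_def]
    have h1 : 0 < 1 / (1 + θ) := by
      rw [one_div]; exact inv_pos.mpr (by linarith)
    have h2 : 0 < a ^ (n + 1) / c := div_pos (by positivity) hc
    linarith
  have hgeq : g n a = Real.sqrt X * P / t := by
    rw [hg n a, hX_def, hP_def, hθ_def, hc_def, ht_def]; ring
  -- the main estimate: `g n a > 6.62`
  have hmain : g n a > 6.62 := by
    rcases le_or_gt (4 / (n : ℝ)) t with hA | hB
    · -- Case A : a is large, the pure exponential term already wins
      have hsqrt : t ≤ Real.sqrt X := by
        have : t ^ 2 ≤ X := by rw [hXeq]; nlinarith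
        calc t = Real.sqrt (t ^ 2) := (Real.sqrt_sq ht.le).symm
          _ ≤ Real.sqrt X := Real.sqrt_le_sqrt this
      -- lower bound for the power
      have hpow : (48.22 : ℝ) < a ^ (n + 1) := by
        have h4n : (0:ℝ) ≤ 4 / n := by positivity
        have hbase : 1 + 4 / (n : ℝ) ≤ a := by
          have : a = 1 + t := by rw [ht_def]; ring
          rw [this]; linarith
        have hb0 : (0:ℝ) < 1 + 4 / (n : ℝ) := by linarith
        have hlog : 4 / (n:ℝ) - (4 / (n:ℝ)) ^ 2 ≤ Real.log (1 + 4 / (n:ℝ)) :=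
          log_ge_sub_sq h4n
        have hexp : (1 + 4 / (n:ℝ)) ^ n = Real.exp ((n : ℝ) * Real.log (1 + 4 / (n:ℝ))) := by
          rw [Real.exp_nat_mul, Real.exp_log hb0]
        have hnlog : (3.99998 : ℝ) ≤ (n : ℝ) * Real.log (1 + 4 / (n:ℝ)) := by
          have h1 : (n:ℝ) * (4 / (n:ℝ) - (4 / (n:ℝ)) ^ 2) ≤
              (n : ℝ) * Real.log (1 + 4 / (n:ℝ)) :=
            mul_le_mul_of_nonneg_left hlog hnpos.le
          have h2 : (n:ℝ) * (4 / (n:ℝ) - (4 / (n:ℝ)) ^ 2) = 4 - 16 / (n:ℝ) := by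
            field_simp; ring
          have h3 : 16 / (n:ℝ) ≤ 0.00002 := by
            rw [div_le_iff₀ hnpos]; nlinarith
          rw [h2] at h1; linarith
        have hexp4 : (54.59 : ℝ) < Real.exp 3.99998 := by
          have he1 : (2.7182818283 : ℝ) < Real.exp 1 := Real.exp_one_gt_d9
          have he4 : Real.exp 4 = Real.exp 1 ^ 4 := by
            rw [← Real.exp_nat_mul]; norm_num
          have h4 : (54.598 : ℝ) < Real.exp 4 := by
            rw [he4]
            calc (54.598 : ℝ) < 2.7182818283 ^ 4 := by norm_num
              _ < Real.exp 1 ^ 4 := by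
                  apply pow_lt_pow_left₀ he1 (by norm_num)
                  norm_num
          have h5 : Real.exp 3.99998 = Real.exp 4 * Real.exp (-0.00002) := by
            rw [← Real.exp_add]; norm_num
          have h6 : (0.99997 : ℝ) ≤ Real.exp (-0.00002) := by
            have := Real.add_one_le_exp (-0.00002 : ℝ); linarith
          nlinarith [Real.exp_pos (4:ℝ)]
        have hchain : (54.59 : ℝ) < (1 + 4 / (n:ℝ)) ^ n := by
          rw [hexp]
          calc (54.59 : ℝ) < Real.exp 3.99998 := hexp4
            _ ≤ Real.exp ((n : ℝ) * Real.log (1 + 4 / (n:ℝ))) := Real.exp_le_exp.mpr hnlog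
        have hmono : (1 + 4 / (n:ℝ)) ^ n ≤ a ^ n := pow_le_pow_left₀ hb0.le hbase n
        have hmono2 : a ^ n ≤ a ^ (n + 1) := pow_le_pow_right₀ (by linarith) (Nat.le_succ n)
        linarith
      have hP2 : (48.22 : ℝ) / c < P := by
        rw [hP_def]
        have h1 : 0 ≤ 1 / (1 + θ) := by positivity
        have h2 : (48.22 : ℝ) / c < a ^ (n + 1) / c := (div_lt_div_iff_of_pos_right hc).mpr hpow
        linarith
      have hgP : P ≤ g n a := by
        rw [hgeq]
        have h1 : t * P ≤ Real.sqrt X * P := mul_le_mul_of_nonneg_right hsqrt hPpos.le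
        have h2 : t * P / t ≤ Real.sqrt X * P / t := by
          exact (div_le_div_iff_of_pos_right ht).mpr h1
        calc P = t * P / t := by field_simp
          _ ≤ Real.sqrt X * P / t := h2
      have hc48 : (6.62 : ℝ) < 48.22 / c := by
        rw [lt_div_iff₀ hc]; rw [hc_def]; nlinarith
      exact lt_of_lt_of_le (lt_trans hc48 hP2) hgP
    · -- Case B : a = 1 + s/n with 0 < s < 4
      set s : ℝ := (n : ℝ) * t with hs_def
      clear_value s
      have hs0 : 0 < s := by rw [hs_def]; exact mul_pos hnpos ht
      have hs4 : s < 4 := by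
        have := (lt_div_iff₀ hnpos).mp hB
        nlinarith
      set SQ : ℝ := Real.sqrt (s ^ 2 + 39.4784) with hSQ_def
      clear_value SQ
      have hSQ0 : 0 ≤ SQ := by rw [hSQ_def]; exact Real.sqrt_nonneg _
      -- (i) the square-root factor
      have hXlb : (s ^ 2 + 39.4784) / (n:ℝ) ^ 2 ≤ X := by
        -- 2 a (1 - cos θ) ≥ 39.4784 / n²
        set u : ℝ := π / (n : ℝ) with hu_def
        clear_value u
        have hu0 : 0 < u := by rw [hu_def]; exact div_pos Real.pi_pos hnpos
        have hu1 : u ≤ 1 := by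
          rw [hu_def, div_le_iff₀ hnpos]; nlinarith
        have husmall : u ≤ 0.0000032 := by
          rw [hu_def, div_le_iff₀ hnpos]; nlinarith
        have hθu : θ = 2 * u := by rw [hθ_def, hu_def]; ring
        have hsin : u - u ^ 3 / 4 < Real.sin u := by
          have := Real.sin_gt_sub_cube hu0; nlinarith [pow_pos hu0 3]
        have hu3 : u ^ 3 ≤ u := by nlinarith [sq_nonneg u, sq_nonneg (1 - u)]
        have hsinpos : 0 ≤ u - u ^ 3 / 4 := by linarith
        have hcosid : Real.cos θ = 1 - 2 * Real.sin u ^ 2 := by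
          rw [hθu, Real.cos_two_mul', Real.cos_sq']; ring
        have hsq : (u - u ^ 3 / 4) ^ 2 ≤ Real.sin u ^ 2 := by
          apply pow_le_pow_left₀ hsinpos hsin.le
        have hnu : (n : ℝ) * u = π := by rw [hu_def]; field_simp
        have hnu3 : (n : ℝ) * (u ^ 3 / 4) ≤ 0.00000001 := by
          have : (n : ℝ) * (u ^ 3 / 4) = π * u ^ 2 / 4 := by
            rw [← hnu]; ring
          rw [this]
          nlinarith
        have hkey : 9.8696 ≤ ((n:ℝ) * (u - u ^ 3 / 4)) ^ 2 := by
          have h1 : (3.14159199 : ℝ) ≤ (n:ℝ) * (u - u ^ 3 / 4) := by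
            have : (n:ℝ) * (u - u ^ 3 / 4) = (n:ℝ) * u - (n:ℝ) * (u ^ 3 / 4) := by ring
            rw [this, hnu]; linarith
          nlinarith
        have h2cos : 39.4784 / (n:ℝ) ^ 2 ≤ 2 * (1 - Real.cos θ) := by
          rw [hcosid, div_le_iff₀ (by positivity : (0:ℝ) < (n:ℝ) ^ 2)]
          have : ((n:ℝ) * (u - u ^ 3 / 4)) ^ 2 ≤ (n:ℝ) ^ 2 * Real.sin u ^ 2 := by
            have := mul_le_mul_of_nonneg_left hsq (by positivity : (0:ℝ) ≤ (n:ℝ) ^ 2)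
            calc ((n:ℝ) * (u - u ^ 3 / 4)) ^ 2 = (n:ℝ) ^ 2 * (u - u ^ 3 / 4) ^ 2 := by ring
              _ ≤ (n:ℝ) ^ 2 * Real.sin u ^ 2 := this
          linarith only [hkey, this]
        have hcos1 : 0 ≤ 1 - Real.cos θ := by linarith only [hcosle]
        rw [hXeq]
        have hmono : 2 * (1 - Real.cos θ) ≤ 2 * a * (1 - Real.cos θ) := by
          have h9 := mul_le_mul_of_nonneg_right (show (2:ℝ) ≤ 2 * a by linarith only [ha]) hcos1
          linarith only [h9]
        have hts : t = s / (n:ℝ) := by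
          rw [hs_def, mul_comm, mul_div_assoc, div_self (ne_of_gt hnpos), mul_one]
        rw [hts]
        have hlast : 39.4784 / (n:ℝ) ^ 2 ≤ 2 * a * (1 - Real.cos θ) :=
          le_trans h2cos hmono
        have hsplit : (s ^ 2 + 39.4784) / (n:ℝ) ^ 2
            = (s / (n:ℝ)) ^ 2 + 39.4784 / (n:ℝ) ^ 2 := by ring
        rw [hsplit]
        linarith only [hlast]
      have hsqrtX : SQ / (n:ℝ) ≤ Real.sqrt X := by
        have h1 : ((s ^ 2 + 39.4784) / (n:ℝ) ^ 2) = (SQ / (n:ℝ)) ^ 2 := by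
          rw [div_pow, hSQ_def, Real.sq_sqrt (by positivity : (0:ℝ) ≤ s ^ 2 + 39.4784)]
        calc SQ / (n:ℝ) = Real.sqrt ((SQ / (n:ℝ)) ^ 2) := by
              rw [Real.sqrt_sq (div_nonneg hSQ0 hnpos.le)]
          _ = Real.sqrt ((s ^ 2 + 39.4784) / (n:ℝ) ^ 2) := by rw [h1]
          _ ≤ Real.sqrt X := Real.sqrt_le_sqrt hXlb
      -- (ii) the bracket factor
      have hPlb : (0.99999 * c + 6.6856 * s - 6.01704) / c ≤ P := by
        have hfirst : (0.99999 : ℝ) ≤ 1 / (1 + θ) := by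
          rw [le_div_iff₀ (by linarith : (0:ℝ) < 1 + θ)]
          linarith only [hθub, hθpos]
        have hpow2 : 6.6856 * (s - 0.9) ≤ a ^ (n + 1) := by
          have hlog : t - t ^ 2 ≤ Real.log (1 + t) := log_ge_sub_sq ht.le
          have h1a : a = 1 + t := by rw [ht_def]; ring
          have hexpn : (1 + t) ^ n = Real.exp ((n:ℝ) * Real.log (1 + t)) := by
            rw [Real.exp_nat_mul, Real.exp_log (by linarith)]
          have hnl : s - 0.00002 ≤ (n:ℝ) * Real.log (1 + t) := by
            have h1 : (n:ℝ) * (t - t ^ 2) ≤ (n:ℝ) * Real.log (1 + t) :=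
              mul_le_mul_of_nonneg_left hlog hnpos.le
            have h2 : (n:ℝ) * (t - t ^ 2) = s - s * t := by rw [hs_def]; ring
            have h3 : s * t ≤ 0.00002 := by
              have h0 := (lt_div_iff₀ hnpos).mp hB
              have h9 := mul_le_mul_of_nonneg_left hn' ht.le
              have htub : t ≤ 0.000004 := by linarith only [h0, h9]
              have h10 := mul_le_mul_of_nonneg_right hs4.le ht.le
              linarith only [h10, htub, ht]
            rw [h2] at h1; linarith
          have hexpge : Real.exp (s - 0.00002) ≤ (1 + t) ^ n := by
            rw [hexpn]; exact Real.exp_le_exp.mpr hnl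
          have hfac : 0.99998 * Real.exp s ≤ Real.exp (s - 0.00002) := by
            have hx : (0.99998:ℝ) ≤ Real.exp (-0.00002) := by
              have := Real.add_one_le_exp (-0.00002:ℝ); linarith
            calc 0.99998 * Real.exp s ≤ Real.exp (-0.00002) * Real.exp s :=
                  mul_le_mul_of_nonneg_right hx (Real.exp_pos s).le
              _ = Real.exp (s - 0.00002) := by rw [← Real.exp_add]; ring_nf
          have hmono2 : (1 + t) ^ n ≤ (1 + t) ^ (n + 1) :=
            pow_le_pow_right₀ (by linarith) (Nat.le_succ n)
          rw [h1a]
          calc 6.6856 * (s - 0.9) ≤ 0.99998 * Real.exp s := exp_linear_lb s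
            _ ≤ Real.exp (s - 0.00002) := hfac
            _ ≤ (1 + t) ^ n := hexpge
            _ ≤ (1 + t) ^ (n + 1) := hmono2
        rw [hP_def, div_le_iff₀ hc, add_mul, div_mul_cancel₀ _ (ne_of_gt hc)]
        have h1c := mul_le_mul_of_nonneg_right hfirst hc.le
        linarith only [h1c, hpow2]
      -- (iii) put everything together
      have hgB : SQ * ((0.99999 * c + 6.6856 * s - 6.01704) / c) / s ≤ g n a := by
        rw [hgeq]
        have h1 : SQ / (n:ℝ) * P ≤ Real.sqrt X * P :=
          mul_le_mul_of_nonneg_right hsqrtX hPpos.le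
        have h2 : SQ / (n:ℝ) * ((0.99999 * c + 6.6856 * s - 6.01704) / c)
            ≤ SQ / (n:ℝ) * P :=
          mul_le_mul_of_nonneg_left hPlb (div_nonneg hSQ0 hnpos.le)
        have h3 : SQ / (n:ℝ) * ((0.99999 * c + 6.6856 * s - 6.01704) / c)
            ≤ Real.sqrt X * P := le_trans h2 h1
        have h4 : SQ / (n:ℝ) * ((0.99999 * c + 6.6856 * s - 6.01704) / c) / t
            ≤ Real.sqrt X * P / t := (div_le_div_iff_of_pos_right ht).mpr h3
        have h5 : SQ / (n:ℝ) * ((0.99999 * c + 6.6856 * s - 6.01704) / c) / t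
            = SQ * ((0.99999 * c + 6.6856 * s - 6.01704) / c) / s := by
          rw [hs_def]; ring
        rw [← h5]; exact h4
      have hfinal : (6.62 : ℝ) < SQ * ((0.99999 * c + 6.6856 * s - 6.01704) / c) / s := by
        rw [lt_div_iff₀ hs0, mul_comm (6.62:ℝ) s, ← mul_div_assoc, lt_div_iff₀ hc]
        -- goal : s * 6.62 * c < SQ * (0.99999 * c + 6.6856 * s - 6.01704)
        have hkey := key_ineq hs0
        have hq : (1.26607 : ℝ) ≤ 0.99999 * c - 6.01704 := by rw [hc_def]; nlinarith
        have h6 : SQ * (6.6856 * s + 1.26607)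
            ≤ SQ * (0.99999 * c + 6.6856 * s - 6.01704) :=
          mul_le_mul_of_nonneg_left (by linarith) hSQ0
        have h7 : s * 6.62 * c ≤ 48.2147 * s := by
          have hcle : c ≤ 7.283186 := by rw [hc_def]; linarith
          nlinarith
        rw [hSQ_def] at h6 ⊢
        linarith
      linarith
  refine ⟨hmain, ?_⟩
  rw [max_self]
  linarith
end
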